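/- Backward induction preserves piecewise-linear concave (min-of-linear) structure: if V_{t+1}(I) = min_{γ∈Γ_{t+1}} ⟨γ, I⟩ for a finite nonempty set Γ_{t+1} ⊆ ℝ^X, and V_t is defined by V_t(I) = ⟨c, I⟩ + min_{u∈U} ∑_{o∈O} min_{γ∈Γ_{t+1}} ⟨γ, M_{u,o} I⟩, where U and O are finite and each M_{u,o} is a linear map on ℝ^X with nonnegative entries, then there exists a finite nonempty set Γ_t ⊆ ℝ^X such that V_t(I) = min_{γ∈Γ_t} ⟨γ, I⟩ for all I in the simplex. -/

import Mathlib

/-!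
Functions `ℝ^X → ℝ` of the form `I ↦ min_{γ ∈ Γ} ⟨γ, I⟩` with `Γ` finite and nonempty
are closed under adding a linear functional, precomposition with a linear map `T` (replace `Γ` by
`Tᵀ Γ`), finite sums (Minkowski sums of the `Γ`s) and finite minima (unions of the `Γ`s). The
Bellman backup is built from `V_{t+1}` by exactly these operations, so the representation of `V_t`
holds on all of `ℝ^X`, in particular on the simplex.
-/
open Matrix

namespace Finset

variable {ι M : Type*} [AddCommMonoid M] [LinearOrder M] [IsOrderedAddMonoid M]

theorem add_inf' (s : Finset ι) (hs : s.Nonempty) (f : ι → M) (a : M) :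
    a + s.inf' hs f = s.inf' hs fun i ↦ a + f i :=
  apply_inf'_eq_inf'_comp hs (a + ·) fun x y ↦ (min_add_add_left a x y).symm

theorem inf'_add (s : Finset ι) (hs : s.Nonempty) (f : ι → M) (a : M) :
    s.inf' hs f + a = s.inf' hs fun i ↦ f i + a :=
  apply_inf'_eq_inf'_comp hs (· + a) fun x y ↦ (min_add_add_right x y a).symm

end Finset

section

variable {R X : Type*} [CommSemiring R] [LinearOrder R] [Fintype X]

def IsMinOfLinear (f : (X → R) → R) : Prop :=
  ∃ (Γ : Finset (X → R)) (hΓ : Γ.Nonempty), ∀ I, f I = Γ.inf' hΓ (· ⬝ᵥ I)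

namespace IsMinOfLinear

theorem dotProduct (c : X → R) : IsMinOfLinear (c ⬝ᵥ ·) :=
  ⟨{c}, Finset.singleton_nonempty c, fun _ ↦ (Finset.inf'_singleton _).symm⟩

theorem zero : IsMinOfLinear (0 : (X → R) → R) := by
  simpa [Pi.zero_def] using dotProduct (0 : X → R)

theorem add [IsOrderedAddMonoid R] {f g : (X → R) → R} (hf : IsMinOfLinear f)
    (hg : IsMinOfLinear g) :
    IsMinOfLinear (f + g) := by
  classical
  obtain ⟨Γ, hΓ, hf⟩ := hf
  obtain ⟨Δ, hΔ, hg⟩ := hg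
  refine ⟨Finset.image₂ (· + ·) Γ Δ, hΓ.image₂ hΔ, fun I ↦ ?_⟩
  simp only [Finset.inf'_image₂_left, add_dotProduct, ← Finset.add_inf', ← Finset.inf'_add,
    Pi.add_apply, hf, hg]

theorem sum [IsOrderedAddMonoid R] {ι : Type*} (s : Finset ι) {f : ι → (X → R) → R}
    (hf : ∀ i ∈ s, IsMinOfLinear (f i)) :
    IsMinOfLinear fun I ↦ ∑ i ∈ s, f i I := by
  rw [← Finset.sum_fn]
  exact Finset.sum_induction f IsMinOfLinear (fun _ _ ↦ add) zero hf

theorem inf' {ι : Type*} (s : Finset ι) (hs : s.Nonempty) {f : ι → (X → R) → R}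
    (hf : ∀ i, IsMinOfLinear (f i)) : IsMinOfLinear fun I ↦ s.inf' hs (f · I) := by
  classical
  choose Γ hΓ hf using hf
  refine ⟨s.biUnion Γ, hs.biUnion fun i _ ↦ hΓ i, fun I ↦ ?_⟩
  rw [Finset.inf'_biUnion _ hs hΓ]
  simp only [hf]

theorem comp_linearMap {f : (X → R) → R} (hf : IsMinOfLinear f)
    (T : (X → R) →ₗ[R] X → R) :
    IsMinOfLinear (f ∘ T) := by
  classical
  obtain ⟨Γ, hΓ, hf⟩ := hf
  refine ⟨Γ.image (· ᵥ* LinearMap.toMatrix' T), hΓ.image _, fun I ↦ ?_⟩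
  simp only [Function.comp_apply, hf, Finset.inf'_image, ← dotProduct_mulVec,
    LinearMap.toMatrix'_mulVec]

end IsMinOfLinear

end

theorem stmt_8_general (X U O : Type*) [Fintype X] [Fintype U] [Fintype O]
    [Nonempty U]
    (c : X → ℝ)
    (M : U → O → (X → ℝ) →ₗ[ℝ] (X → ℝ))
    (Γ' : Finset (X → ℝ)) (hΓ' : Γ'.Nonempty)
    (Vt : (X → ℝ) → ℝ)
    (hVt : ∀ I : X → ℝ, Vt I =
      (∑ x, c x * I x) +
      Finset.univ.inf' Finset.univ_nonempty (fun u : U =>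
        ∑ o : O, Γ'.inf' hΓ' (fun γ => ∑ x, γ x * (M u o I) x))) :
    ∃ (Γt : Finset (X → ℝ)) (hΓt : Γt.Nonempty),
      ∀ I : X → ℝ, (∀ x, 0 ≤ I x) → ∑ x, I x = 1 →
        Vt I = Γt.inf' hΓt (fun γ => ∑ x, γ x * I x) := by
  have hNext : IsMinOfLinear fun I ↦ Γ'.inf' hΓ' (· ⬝ᵥ I) := ⟨Γ', hΓ', fun _ ↦ rfl⟩
  have hBackup : IsMinOfLinear Vt := by
    rw [show Vt = _ from funext hVt]
    exact (IsMinOfLinear.dotProduct c).add <| .inf' _ _ fun u ↦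
      .sum _ fun o _ ↦ hNext.comp_linearMap (M u o)
  obtain ⟨Γt, hΓt, hBackup⟩ := hBackup
  exact ⟨Γt, hΓt, fun I _ _ ↦ hBackup I⟩

/-- The Bellman backup of a min-of-linear value function is again a
min-of-linear function: there is a finite nonempty Γ_t representing V_t on the simplex. -/
theorem stmt_8 (X U O : Type*) [Fintype X] [Fintype U] [Fintype O]
    [Nonempty U] [Nonempty O] [DecidableEq (X → ℝ)]
    (c : X → ℝ)
    (M : U → O → (X → ℝ) →ₗ[ℝ] (X → ℝ))
    (hM : ∀ u o (I : X → ℝ), (∀ x, 0 ≤ I x) → ∀ x, 0 ≤ M u o I x)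
    (Γ' : Finset (X → ℝ)) (hΓ' : Γ'.Nonempty)
    (Vt : (X → ℝ) → ℝ)
    (hVt : ∀ I : X → ℝ, Vt I =
      (∑ x, c x * I x) +
      Finset.univ.inf' Finset.univ_nonempty (fun u : U =>
        ∑ o : O, Γ'.inf' hΓ' (fun γ => ∑ x, γ x * (M u o I) x))) :
    ∃ (Γt : Finset (X → ℝ)) (hΓt : Γt.Nonempty),
      ∀ I : X → ℝ, (∀ x, 0 ≤ I x) → ∑ x, I x = 1 →
        Vt I = Γt.inf' hΓt (fun γ => ∑ x, γ x * I x) :=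
  stmt_8_general X U O c M Γ' hΓ' Vt hVt
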